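/- arXiv:1709.04778 — 3 statements merged into one kernel-verified Lean document; each statement's English description precedes it below -/
import Mathlib

section
/- Let Φ : [0,T) × ℝ³ → ℝ be a C² solution of -∂_t²Φ + w(∂_tΦ)ΔΦ = -(∂_tΦ)², where w is C¹ on the range of ∂_tΦ. Let I solve ∂_t I = -I·∂_tΦ, I(0,·)=1, and set Ψ_α := I∂_αΦ and ψ̊_i(x) := ∂_iΦ(0,x). Then ∂_tΨ_0 = w(I^{-1}Ψ_0)·Σ_{a=1}³ ∂_aΨ_a + I^{-1}w(I^{-1}Ψ_0)·Σ_{a=1}³ Ψ_a² − w(I^{-1}Ψ_0)·Σ_{a=1}³ ψ̊_a Ψ_a, and ∂_tΨ_i = ∂_iΨ_0 − ψ̊_i Ψ_0 for i=1,2,3. -/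
/-!
The integrating factor `I` turns the wave equation into a first-order system once one knows the
identity `∂_a I = I (ψ̊_a - ∂_aΦ)`. Both sides vanish at `t = 0`, and after division by `I` both
sides have time derivative `-∂_a∂_tΦ`, since `∂_a I` and `I` solve the same linear equation
`∂_t u = -u ∂_tΦ` up to the source `-I ∂_a∂_tΦ`. Given that identity, both evolution equations are
the product rule followed by algebra with the wave equation.
-/

open Set

theorem eq_left_of_forall_hasDerivAt_zero_Ico {E : Type*} [NormedAddCommGroup E]
    [NormedSpace ℝ E] {f : ℝ → E} {a b : ℝ} (hf : ∀ t ∈ Ico a b, HasDerivAt f 0 t) :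
    ∀ t ∈ Ico a b, f t = f a := by
  intro t ht
  have hsub : Icc a t ⊆ Ico a b := Icc_subset_Ico_right ht.2
  exact constant_of_has_deriv_right_zero
    (fun s hs => (hf s (hsub hs)).continuousAt.continuousWithinAt)
    (fun s hs => (hf s (hsub (Ico_subset_Icc_self hs))).hasDerivWithinAt) t ⟨ht.1, le_rfl⟩

theorem div_add_eq_of_hasDerivAt_Ico {I J φ ψ ψ' : ℝ → ℝ} {a b : ℝ}
    (hI : ∀ t ∈ Ico a b, HasDerivAt I (-I t * φ t) t)
    (hJ : ∀ t ∈ Ico a b, HasDerivAt J (-J t * φ t - I t * ψ' t) t)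
    (hψ : ∀ t ∈ Ico a b, HasDerivAt ψ (ψ' t) t) (hI_ne : ∀ t ∈ Ico a b, I t ≠ 0) :
    ∀ t ∈ Ico a b, J t / I t + ψ t = J a / I a + ψ a := by
  refine eq_left_of_forall_hasDerivAt_zero_Ico fun t ht => ?_
  refine ((hJ t ht).div (hI t ht) (hI_ne t ht)).add (hψ t ht) |>.congr_deriv ?_
  field_simp [hI_ne t ht]
  ring

theorem stmt4_general (T : ℝ) (w : ℝ → ℝ)
    (Φt Φtt I : ℝ → (Fin 3 → ℝ) → ℝ)
    (Φi Φii Φti Ia : Fin 3 → ℝ → (Fin 3 → ℝ) → ℝ)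
    (hIpos : ∀ t ∈ Set.Ico (0 : ℝ) T, ∀ x, 0 < I t x)
    (hI0 : ∀ x, I 0 x = 1) (hIa0 : ∀ a x, Ia a 0 x = 0)
    -- time derivatives
    (hΦtt : ∀ x, ∀ t ∈ Set.Ico (0 : ℝ) T, HasDerivAt (fun s => Φt s x) (Φtt t x) t)
    (hΦit : ∀ a x, ∀ t ∈ Set.Ico (0 : ℝ) T,
      HasDerivAt (fun s => Φi a s x) (Φti a t x) t)
    (hIt : ∀ x, ∀ t ∈ Set.Ico (0 : ℝ) T,
      HasDerivAt (fun s => I s x) (-(I t x) * Φt t x) t)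
    (hIat : ∀ a x, ∀ t ∈ Set.Ico (0 : ℝ) T,
      HasDerivAt (fun s => Ia a s x)
        (-(Ia a t x) * Φt t x - I t x * Φti a t x) t)
    -- the quasilinear wave equation
    (hwave : ∀ t ∈ Set.Ico (0 : ℝ) T, ∀ x,
      -(Φtt t x) + w (Φt t x) * (∑ a : Fin 3, Φii a t x) = -(Φt t x) ^ 2) :
    (∀ x, ∀ t ∈ Set.Ico (0 : ℝ) T,
      HasDerivAt (fun s => I s x * Φt s x)
        (w ((I t x)⁻¹ * (I t x * Φt t x)) *
            (∑ a : Fin 3, (Ia a t x * Φi a t x + I t x * Φii a t x))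
          + (I t x)⁻¹ * w ((I t x)⁻¹ * (I t x * Φt t x)) *
            (∑ a : Fin 3, (I t x * Φi a t x) ^ 2)
          - w ((I t x)⁻¹ * (I t x * Φt t x)) *
            (∑ a : Fin 3, Φi a 0 x * (I t x * Φi a t x))) t) ∧
    (∀ i : Fin 3, ∀ x, ∀ t ∈ Set.Ico (0 : ℝ) T,
      HasDerivAt (fun s => I s x * Φi i s x)
        ((Ia i t x * Φt t x + I t x * Φti i t x)
          - Φi i 0 x * (I t x * Φt t x)) t) := by
  have hI_ne : ∀ x, ∀ t ∈ Ico (0 : ℝ) T, I t x ≠ 0 := fun x t ht => (hIpos t ht x).ne'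
  have hIa : ∀ a x, ∀ t ∈ Ico (0 : ℝ) T, Ia a t x = I t x * (Φi a 0 x - Φi a t x) := by
    intro a x t ht
    have h := div_add_eq_of_hasDerivAt_Ico (hIt x) (hIat a x) (hΦit a x) (hI_ne x) t ht
    rw [hI0, hIa0, zero_div, zero_add] at h
    field_simp [hI_ne x t ht] at h
    linear_combination h
  refine ⟨fun x t ht => ?_, fun i x t ht => ?_⟩
  · refine (hIt x t ht).mul (hΦtt x t ht) |>.congr_deriv ?_
    rw [inv_mul_cancel_left₀ (hI_ne x t ht)]
    simp only [Fin.sum_univ_three, hIa _ x t ht] at hwave ⊢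
    field_simp [hI_ne x t ht]
    linear_combination -hwave t ht x
  · refine (hIt x t ht).mul (hΦit i x t ht) |>.congr_deriv ?_
    rw [hIa i x t ht]
    ring

/-- The `I`-weighted evolution equations: for a C² solution `Φ` of
`-∂_t²Φ + w(∂_tΦ)ΔΦ = -(∂_tΦ)²`, with integrating factor `I` solving
`∂_t I = -I ∂_tΦ`, `I(0,·)=1`, the renormalized variables `Ψ_α := I ∂_αΦ`
satisfy `∂_tΨ₀ = w(I⁻¹Ψ₀)Σ∂_aΨ_a + I⁻¹w(I⁻¹Ψ₀)ΣΨ_a² - w(I⁻¹Ψ₀)Σψ̊_aΨ_a` and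
`∂_tΨ_i = ∂_iΨ₀ - ψ̊_iΨ₀`, where `ψ̊_i(x) := ∂_iΦ(0,x)`. -/
theorem stmt4 (T : ℝ) (hT : 0 < T) (w : ℝ → ℝ)
    (Φ Φt Φtt I : ℝ → (Fin 3 → ℝ) → ℝ)
    (Φi Φii Φti Ia : Fin 3 → ℝ → (Fin 3 → ℝ) → ℝ)
    (hIpos : ∀ t ∈ Set.Ico (0 : ℝ) T, ∀ x, 0 < I t x)
    (hI0 : ∀ x, I 0 x = 1) (hIa0 : ∀ a x, Ia a 0 x = 0)
    -- time derivatives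
    (hΦt : ∀ x, ∀ t ∈ Set.Ico (0 : ℝ) T, HasDerivAt (fun s => Φ s x) (Φt t x) t)
    (hΦtt : ∀ x, ∀ t ∈ Set.Ico (0 : ℝ) T, HasDerivAt (fun s => Φt s x) (Φtt t x) t)
    (hΦit : ∀ a x, ∀ t ∈ Set.Ico (0 : ℝ) T,
      HasDerivAt (fun s => Φi a s x) (Φti a t x) t)
    (hIt : ∀ x, ∀ t ∈ Set.Ico (0 : ℝ) T,
      HasDerivAt (fun s => I s x) (-(I t x) * Φt t x) t)
    (hIat : ∀ a x, ∀ t ∈ Set.Ico (0 : ℝ) T,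
      HasDerivAt (fun s => Ia a s x)
        (-(Ia a t x) * Φt t x - I t x * Φti a t x) t)
    -- spatial derivatives (partial derivative in the `a`-th coordinate)
    (hΦsp : ∀ a x, ∀ t ∈ Set.Ico (0 : ℝ) T,
      HasDerivAt (fun y => Φ t (Function.update x a y)) (Φi a t x) (x a))
    (hΦisp : ∀ a x, ∀ t ∈ Set.Ico (0 : ℝ) T,
      HasDerivAt (fun y => Φi a t (Function.update x a y)) (Φii a t x) (x a))
    (hΦtsp : ∀ a x, ∀ t ∈ Set.Ico (0 : ℝ) T,
      HasDerivAt (fun y => Φt t (Function.update x a y)) (Φti a t x) (x a))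
    (hIsp : ∀ a x, ∀ t ∈ Set.Ico (0 : ℝ) T,
      HasDerivAt (fun y => I t (Function.update x a y)) (Ia a t x) (x a))
    -- the quasilinear wave equation
    (hwave : ∀ t ∈ Set.Ico (0 : ℝ) T, ∀ x,
      -(Φtt t x) + w (Φt t x) * (∑ a : Fin 3, Φii a t x) = -(Φt t x) ^ 2) :
    (∀ x, ∀ t ∈ Set.Ico (0 : ℝ) T,
      HasDerivAt (fun s => I s x * Φt s x)
        (w ((I t x)⁻¹ * (I t x * Φt t x)) *
            (∑ a : Fin 3, (Ia a t x * Φi a t x + I t x * Φii a t x))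
          + (I t x)⁻¹ * w ((I t x)⁻¹ * (I t x * Φt t x)) *
            (∑ a : Fin 3, (I t x * Φi a t x) ^ 2)
          - w ((I t x)⁻¹ * (I t x * Φt t x)) *
            (∑ a : Fin 3, Φi a 0 x * (I t x * Φi a t x))) t) ∧
    (∀ i : Fin 3, ∀ x, ∀ t ∈ Set.Ico (0 : ℝ) T,
      HasDerivAt (fun s => I s x * Φi i s x)
        ((Ia i t x * Φt t x + I t x * Φti i t x)
          - Φi i 0 x * (I t x * Φt t x)) t) :=
  stmt4_general T w Φt Φtt I Φi Φii Φti Ia hIpos hI0 hIa0 hΦtt hΦit hIt hIat hwave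
end

section
/- Let Q : [0,T] × [0,U] → [0,∞) be continuous and nondecreasing in each variable, and suppose Q(t,u) ≤ C·Q(0,u) + c·∫₀^t Q(t',u) dt' + c·∫₀^u Q(t,u') du' for all (t,u). Then Q(t,u) ≤ C·Q(0,u)·e^{2ct}·e^{2cu} for all (t,u) ∈ [0,T] × [0,U] (with constant 2c, or any constant c' > c for small enough domains). -/
/-! For `M > C·Q(0,u₀)` the barrier `M e^{2c(t+u)}` strictly dominates `Q` on `[0,T] × [0,u₀]`.
Otherwise take a failure point minimising `t + u`: there `Q` lies below the barrier on both
lower segments, so the integral inequality gives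
`Q(t,u) ≤ C·Q(0,u) + M (e^{2c(t+u)} - (e^{2ct} + e^{2cu})/2) < M e^{2c(t+u)}`,
using `C·Q(0,u) ≤ C·Q(0,u₀) < M` and `e^{2ct}, e^{2cu} ≥ 1`. Let `M ↓ C·Q(0,u₀)`. -/

open Set intervalIntegral MeasureTheory Real

lemma mul_integral_exp_two_mul_add (c M s t : ℝ) :
    c * ∫ x in (0 : ℝ)..t, M * exp (2 * c * (x + s)) =
      M * exp (2 * c * s) * (exp (2 * c * t) - 1) / 2 := by
  rcases eq_or_ne c 0 with rfl | hc
  · simp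
  have hfun : (fun x => M * exp (2 * c * (x + s))) =
      fun x => M * exp (2 * c * s) * exp (2 * c * x) := by
    funext x
    rw [mul_add, exp_add]
    ring
  rw [hfun, intervalIntegral.integral_const_mul,
    integral_comp_mul_left (fun x => exp x) (mul_ne_zero two_ne_zero hc),
    integral_exp, mul_zero, exp_zero, smul_eq_mul]
  field_simp

theorem lt_on_Icc_prod_of_lt_on_lower_segments {f g : ℝ × ℝ → ℝ} {a₁ b₁ a₂ b₂ : ℝ}
    (hf : ContinuousOn f (Icc a₁ b₁ ×ˢ Icc a₂ b₂)) (hg : ContinuousOn g (Icc a₁ b₁ ×ˢ Icc a₂ b₂))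
    (hstep : ∀ t ∈ Icc a₁ b₁, ∀ u ∈ Icc a₂ b₂, (∀ x ∈ Ico a₁ t, f (x, u) < g (x, u)) →
      (∀ y ∈ Ico a₂ u, f (t, y) < g (t, y)) → f (t, u) < g (t, u)) :
    ∀ p ∈ Icc a₁ b₁ ×ˢ Icc a₂ b₂, f p < g p := by
  by_contra! ⟨p, hpR, hp⟩
  have hS : IsCompact {q ∈ Icc a₁ b₁ ×ˢ Icc a₂ b₂ | g q ≤ f q} :=
    (isCompact_Icc.prod isCompact_Icc).of_isClosed_subset
      ((isClosed_Icc.prod isClosed_Icc).isClosed_le hg hf) (sep_subset _ _)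
  obtain ⟨⟨t, u⟩, ⟨⟨ht, hu⟩, hle⟩, hmin⟩ :=
    hS.exists_isMinOn ⟨p, hpR, hp⟩ (continuous_fst.add continuous_snd).continuousOn
  refine hle.not_gt (hstep t ht u hu (fun x hx => ?_) (fun y hy => ?_))
  · by_contra! hx'
    have : t + u ≤ x + u := isMinOn_iff.1 hmin (x, u) ⟨⟨⟨hx.1, hx.2.le.trans ht.2⟩, hu⟩, hx'⟩
    linarith [hx.2]
  · by_contra! hy'
    have : t + u ≤ t + y := isMinOn_iff.1 hmin (t, y) ⟨⟨ht, ⟨hy.1, hy.2.le.trans hu.2⟩⟩, hy'⟩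
    linarith [hy.2]

theorem add_mul_integral_lt_exp_barrier {c A M t u : ℝ} {f g : ℝ → ℝ} (hc : 0 ≤ c) (hA : 0 ≤ A)
    (hAM : A < M) (ht : 0 ≤ t) (hu : 0 ≤ u) (hf : IntervalIntegrable f volume 0 t)
    (hg : IntervalIntegrable g volume 0 u)
    (hf_le : ∀ x ∈ Ioo 0 t, f x ≤ M * exp (2 * c * (x + u)))
    (hg_le : ∀ y ∈ Ioo 0 u, g y ≤ M * exp (2 * c * (t + y))) :
    A + c * (∫ x in (0 : ℝ)..t, f x) + c * (∫ y in (0 : ℝ)..u, g y) <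
      M * exp (2 * c * (t + u)) := by
  have hIf : c * (∫ x in (0 : ℝ)..t, f x) ≤ M * exp (2 * c * u) * (exp (2 * c * t) - 1) / 2 := by
    rw [← mul_integral_exp_two_mul_add]
    exact mul_le_mul_of_nonneg_left
      (integral_mono_on_of_le_Ioo ht hf (Continuous.intervalIntegrable (by fun_prop) _ _) hf_le) hc
  have hIg : c * (∫ y in (0 : ℝ)..u, g y) ≤ M * exp (2 * c * t) * (exp (2 * c * u) - 1) / 2 := by
    rw [← mul_integral_exp_two_mul_add]
    exact mul_le_mul_of_nonneg_left
      (integral_mono_on_of_le_Ioo hu hg (Continuous.intervalIntegrable (by fun_prop) _ _)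
        fun y hy => add_comm t y ▸ hg_le y hy) hc
  have ha : 1 ≤ exp (2 * c * t) := one_le_exp (by positivity)
  have hb : 1 ≤ exp (2 * c * u) := one_le_exp (by positivity)
  rw [mul_add, exp_add]
  -- with `a = e^{2ct}, b = e^{2cu} ≥ 1` the margin is `M (a + b) / 2 - A ≥ M - A > 0`
  nlinarith

theorem stmt11_general (T U C c : ℝ) (hT : 0 ≤ T) (hC : 1 ≤ C) (hc : 0 ≤ c)
    (Q : ℝ → ℝ → ℝ)
    (hcont : ContinuousOn (fun p : ℝ × ℝ => Q p.1 p.2)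
      (Set.Icc 0 T ×ˢ Set.Icc 0 U))
    (hnn : ∀ t u, 0 ≤ Q t u)
    (hmono_u : ∀ t ∈ Set.Icc (0 : ℝ) T, MonotoneOn (fun u => Q t u) (Set.Icc 0 U))
    (hineq : ∀ t ∈ Set.Icc (0 : ℝ) T, ∀ u ∈ Set.Icc (0 : ℝ) U,
      Q t u ≤ C * Q 0 u + c * (∫ t' in (0 : ℝ)..t, Q t' u)
        + c * (∫ u' in (0 : ℝ)..u, Q t u')) :
    ∀ t ∈ Set.Icc (0 : ℝ) T, ∀ u ∈ Set.Icc (0 : ℝ) U,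
      Q t u ≤ C * Q 0 u * Real.exp (2 * c * t) * Real.exp (2 * c * u) := by
  intro t ht u₀ hu₀
  have hQ : ContinuousOn (fun p : ℝ × ℝ => Q p.1 p.2) (Icc 0 T ×ˢ Icc 0 u₀) :=
    hcont.mono (prod_mono_right (Icc_subset_Icc_right hu₀.2))
  have hbarrier : ∀ M > C * Q 0 u₀, Q t u₀ < M * exp (2 * c * (t + u₀)) := by
    intro M hM
    refine lt_on_Icc_prod_of_lt_on_lower_segments (f := fun p => Q p.1 p.2)
      (g := fun p => M * exp (2 * c * (p.1 + p.2))) hQ (by fun_prop) ?_ (t, u₀)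
      ⟨ht, right_mem_Icc.2 hu₀.1⟩
    intro t' ht' u hu hlt_t hlt_u
    have hu' : u ∈ Icc 0 U := ⟨hu.1, hu.2.trans hu₀.2⟩
    have hQ0 : C * Q 0 u ≤ C * Q 0 u₀ :=
      mul_le_mul_of_nonneg_left (hmono_u 0 (left_mem_Icc.2 hT) hu' hu₀ hu.2) (by linarith)
    have hint_t : IntervalIntegrable (fun x => Q x u) volume 0 t' :=
      (hQ.comp (continuous_id.prodMk continuous_const).continuousOn
        fun x hx => ⟨⟨hx.1, hx.2.trans ht'.2⟩, hu⟩).intervalIntegrable_of_Icc ht'.1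
    have hint_u : IntervalIntegrable (fun y => Q t' y) volume 0 u :=
      (hQ.comp (continuous_const.prodMk continuous_id).continuousOn
        fun y hy => ⟨ht', ⟨hy.1, hy.2.trans hu.2⟩⟩).intervalIntegrable_of_Icc hu.1
    exact (hineq t' ht' u hu').trans_lt <|
      add_mul_integral_lt_exp_barrier hc (mul_nonneg (by linarith) (hnn 0 u)) (hQ0.trans_lt hM)
        ht'.1 hu.1 hint_t hint_u (fun x hx => (hlt_t x (Ioo_subset_Ico_self hx)).le)
        (fun y hy => (hlt_u y (Ioo_subset_Ico_self hy)).le)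
  have hE : 0 < exp (2 * c * (t + u₀)) := exp_pos _
  rw [mul_assoc, ← exp_add, ← mul_add, ← div_le_iff₀ hE]
  exact le_of_forall_gt_imp_ge_of_dense fun M hM => ((div_lt_iff₀ hE).2 (hbarrier M hM)).le

/-- Two-variable Gronwall inequality: if `Q ≥ 0` is continuous, nondecreasing
in each variable, and satisfies
`Q(t,u) ≤ C·Q(0,u) + c∫₀^t Q(t',u)dt' + c∫₀^u Q(t,u')du'`,
then `Q(t,u) ≤ C·Q(0,u)·e^{2ct}·e^{2cu}`. -/
theorem stmt11 (T U C c : ℝ) (hT : 0 ≤ T) (hU : 0 ≤ U) (hC : 1 ≤ C) (hc : 0 ≤ c)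
    (Q : ℝ → ℝ → ℝ)
    (hcont : ContinuousOn (fun p : ℝ × ℝ => Q p.1 p.2)
      (Set.Icc 0 T ×ˢ Set.Icc 0 U))
    (hnn : ∀ t u, 0 ≤ Q t u)
    (hmono_t : ∀ u ∈ Set.Icc (0 : ℝ) U, MonotoneOn (fun t => Q t u) (Set.Icc 0 T))
    (hmono_u : ∀ t ∈ Set.Icc (0 : ℝ) T, MonotoneOn (fun u => Q t u) (Set.Icc 0 U))
    (hineq : ∀ t ∈ Set.Icc (0 : ℝ) T, ∀ u ∈ Set.Icc (0 : ℝ) U,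
      Q t u ≤ C * Q 0 u + c * (∫ t' in (0 : ℝ)..t, Q t' u)
        + c * (∫ u' in (0 : ℝ)..u, Q t u')) :
    ∀ t ∈ Set.Icc (0 : ℝ) T, ∀ u ∈ Set.Icc (0 : ℝ) U,
      Q t u ≤ C * Q 0 u * Real.exp (2 * c * t) * Real.exp (2 * c * u) :=
  stmt11_general T U C c hT hC hc Q hcont hnn hmono_u hineq
end

section
/- Let w : (-1/2,∞) → (0,∞) be continuous. Let I, Ψ₀ : D → ℝ (D ⊆ ℝ⁴) with I > 0 and Ψ₀/I > -1/2 pointwise, and suppose there exist constants α, C, m > 0 such that: (a) whenever Ψ₀ ≥ m and Ψ₀/I ≥ 1, y²|w'(y)| ≤ C at y = Ψ₀/I and w(y) ≤ α|w'(y)|^{1/2}; (b) whenever I > δ (for fixed δ > 0), w(Ψ₀/I) ≤ C. Assume additionally Ψ₀ ≥ m on {I ≤ δ} and Ψ₀/I ≥ 1 on {I ≤ δ}. Then I^{-1}·w(Ψ₀/I) ≤ max(C/δ, α·C^{1/2}/m) pointwise on D; i.e., the a priori singular product I^{-1}w(I^{-1}Ψ₀) is uniformly bounded. -/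
/-!
Write `y = Ψ₀ / I`. Where `I > δ` the factor `I⁻¹` is at most `δ⁻¹` and `w(y) ≤ C`. Where `I ≤ δ`,
`I⁻¹ w(y) = y w(y) / Ψ₀` trades the singular factor for the bounded-below `Ψ₀ ≥ m`, and
`y w(y) ≤ α y |w'(y)|^{1/2} = α (y² |w'(y)|)^{1/2} ≤ α √C`.
-/

open Real

theorem mul_le_mul_sqrt_of_sq_mul_le {y v d α C : ℝ} (hy : 0 ≤ y) (hα : 0 ≤ α)
    (hyd : y ^ 2 * d ≤ C) (hv : v ≤ α * √d) : y * v ≤ α * √C :=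
  calc y * v ≤ y * (α * √d) := mul_le_mul_of_nonneg_left hv hy
    _ = α * √(y ^ 2 * d) := by rw [sqrt_mul (sq_nonneg y), sqrt_sq hy]; ring
    _ ≤ α * √C := by gcongr

theorem inv_mul_le_div_of_lt {I v C δ : ℝ} (hδ : 0 < δ) (hC : 0 ≤ C) (hI : δ < I)
    (hv : v ≤ C) : I⁻¹ * v ≤ C / δ := by
  rw [inv_mul_eq_div]
  exact div_le_div₀ hC hv hδ hI.le

theorem inv_mul_le_div_of_div_mul_le {I Ψ v K m : ℝ} (hm : 0 < m) (hΨ : m ≤ Ψ) (hK : 0 ≤ K)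
    (h : Ψ / I * v ≤ K) : I⁻¹ * v ≤ K / m := by
  have hΨ₀ : Ψ ≠ 0 := (hm.trans_le hΨ).ne'
  have hsplit : I⁻¹ * v = Ψ / I * v / Ψ := by
    rw [div_eq_mul_inv Ψ I]
    field_simp
  rw [hsplit]
  exact div_le_div₀ hK h hm hΨ

theorem stmt19_general {P : Type*} (w : ℝ → ℝ)
    (I Ψ₀ : P → ℝ) (α C m δ : ℝ)
    (hα : 0 < α) (hC : 0 < C) (hm : 0 < m) (hδ : 0 < δ)
    (ha : ∀ p, m ≤ Ψ₀ p → 1 ≤ Ψ₀ p / I p →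
      (Ψ₀ p / I p) ^ 2 * |deriv w (Ψ₀ p / I p)| ≤ C ∧
      w (Ψ₀ p / I p) ≤ α * Real.sqrt |deriv w (Ψ₀ p / I p)|)
    (hb : ∀ p, δ < I p → w (Ψ₀ p / I p) ≤ C)
    (hsmall : ∀ p, I p ≤ δ → m ≤ Ψ₀ p ∧ 1 ≤ Ψ₀ p / I p) :
    ∀ p, (I p)⁻¹ * w (Ψ₀ p / I p) ≤ max (C / δ) (α * Real.sqrt C / m) := by
  intro p
  by_cases hI : δ < I p
  · exact (inv_mul_le_div_of_lt hδ hC.le hI (hb p hI)).trans (le_max_left _ _)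
  · obtain ⟨hΨ, hy⟩ := hsmall p (not_lt.mp hI)
    obtain ⟨hderiv, hw⟩ := ha p hΨ hy
    have hyw : Ψ₀ p / I p * w (Ψ₀ p / I p) ≤ α * √C :=
      mul_le_mul_sqrt_of_sq_mul_le (zero_le_one.trans hy) hα.le hderiv hw
    exact (inv_mul_le_div_of_div_mul_le hm hΨ (by positivity) hyw).trans (le_max_right _ _)

/-- The key regularization estimate: the a priori singular product
`I⁻¹·w(I⁻¹Ψ₀)` is uniformly bounded. Writing `y = Ψ₀/I`, the structural
assumptions `y²|w'(y)| ≤ C` and `w ≤ α|w'|^{1/2}` give `y·w(y) ≤ α√C`, and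
the lower bound `Ψ₀ ≥ m` on `{I ≤ δ}` (with `w(Ψ₀/I) ≤ C` on `{I > δ}`)
yields `I⁻¹w(Ψ₀/I) ≤ max(C/δ, α√C/m)`. -/
theorem stmt19 {P : Type*} (w : ℝ → ℝ)
    (hwc : ContinuousOn w (Set.Ioi (-1/2 : ℝ)))
    (hwpos : ∀ y : ℝ, -1/2 < y → 0 < w y)
    (I Ψ₀ : P → ℝ) (α C m δ : ℝ)
    (hα : 0 < α) (hC : 0 < C) (hm : 0 < m) (hδ : 0 < δ)
    (hIpos : ∀ p, 0 < I p) (hratio : ∀ p, -1/2 < Ψ₀ p / I p)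
    (ha : ∀ p, m ≤ Ψ₀ p → 1 ≤ Ψ₀ p / I p →
      (Ψ₀ p / I p) ^ 2 * |deriv w (Ψ₀ p / I p)| ≤ C ∧
      w (Ψ₀ p / I p) ≤ α * Real.sqrt |deriv w (Ψ₀ p / I p)|)
    (hb : ∀ p, δ < I p → w (Ψ₀ p / I p) ≤ C)
    (hsmall : ∀ p, I p ≤ δ → m ≤ Ψ₀ p ∧ 1 ≤ Ψ₀ p / I p) :
    ∀ p, (I p)⁻¹ * w (Ψ₀ p / I p) ≤ max (C / δ) (α * Real.sqrt C / m) :=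
  stmt19_general w I Ψ₀ α C m δ hα hC hm hδ ha hb hsmall
end
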